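/- arXiv:2202.04421 — 3 statements merged into one kernel-verified Lean document; each statement's English description precedes it below -/
import Mathlib

section
/- The system of polynomial equations in complex variables s, t: (i) -t^4 - 4ts + (s^2+3)t^2 + s^2 = 0 and (ii) s + (-s^2-1)t + t^2 s = 0, together with the constraints s ≠ 0, s ∉ {1,-1,3,-3}, t ∉ {0, 1, -1}, implies s = t. -/
/-- Every solution of the system `-t^4 - 4ts + (s^2+3)t^2 + s^2 = 0`,
`s + (-s^2-1)t + t^2 s = 0` with the listed exclusions satisfies `s = t`. -/
theorem system_forces_s_eq_t (s t : ℂ)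
    (hs0 : s ≠ 0) (hs1 : s ≠ 1) (hs1' : s ≠ -1) (hs3 : s ≠ 3) (hs3' : s ≠ -3)
    (ht0 : t ≠ 0) (ht1 : t ≠ 1) (ht1' : t ≠ -1)
    (h1 : -t ^ 4 - 4 * t * s + (s ^ 2 + 3) * t ^ 2 + s ^ 2 = 0)
    (h2 : s + (-s ^ 2 - 1) * t + t ^ 2 * s = 0) :
    s = t := by
  have hfac : (s * t - 1) * (t - s) = 0 := by linear_combination h2
  rcases mul_eq_zero.mp hfac with hst | hts
  · exfalso
    have hcube : (t ^ 2 - 1) ^ 3 = 0 := by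
      linear_combination (-t ^ 2) * h1 + ((t ^ 3 + t) * s + 1 - 3 * t ^ 2) * hst
    have ht2 : t ^ 2 - 1 = 0 := by
      exact pow_eq_zero_iff (n := 3) (by norm_num) |>.mp hcube
    have : (t - 1) * (t + 1) = 0 := by linear_combination ht2
    rcases mul_eq_zero.mp this with h | h
    · exact ht1 (by linear_combination h)
    · exact ht1' (by linear_combination h)
  · linear_combination -hts
end

section
/- Evaluate: (3/28)·[∫_0^1 ∫_0^{1+u} 2(3-u)(1+u-v) dv du + ∫_1^{3/2} ∫_0^2 4(v-2)(-3+2u) dv du] = 13/16, and in particular 13/16 < 1. -/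
open intervalIntegral

lemma poly_int (a b c0 c1 c2 c3 : ℝ) :
    (∫ x in a..b, (c0 + c1*x + c2*x^2 + c3*x^3)) =
      (c0*b + c1*b^2/2 + c2*b^3/3 + c3*b^4/4) -
      (c0*a + c1*a^2/2 + c2*a^3/3 + c3*a^4/4) := by
  have key : (∫ x in a..b, (c0 + c1*x + c2*x^2 + c3*x^3)) =
      (fun x : ℝ => c0*x + (c1/2)*x^2 + (c2/3)*x^3 + (c3/4)*x^4) b -
      (fun x : ℝ => c0*x + (c1/2)*x^2 + (c2/3)*x^3 + (c3/4)*x^4) a := by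
    apply intervalIntegral.integral_eq_sub_of_hasDerivAt
    · intro x _
      have h0 : HasDerivAt (fun x : ℝ => c0 * x) c0 x := by
        simpa using (hasDerivAt_id x).const_mul c0
      have h1 : HasDerivAt (fun x : ℝ => (c1/2) * x^2) (c1 * x) x := by
        have := (hasDerivAt_pow 2 x).const_mul (c1/2)
        exact this.congr_deriv (by push_cast; ring)
      have h2 : HasDerivAt (fun x : ℝ => (c2/3) * x^3) (c2 * x^2) x := by
        have := (hasDerivAt_pow 3 x).const_mul (c2/3)
        exact this.congr_deriv (by push_cast; ring)
      have h3 : HasDerivAt (fun x : ℝ => (c3/4) * x^4) (c3 * x^3) x := by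
        have := (hasDerivAt_pow 4 x).const_mul (c3/4)
        exact this.congr_deriv (by push_cast; ring)
      exact ((h0.add h1).add h2).add h3
    · apply Continuous.intervalIntegrable
      continuity
  rw [key]; ring

/-- `S(W_{•,•}^{E_L}; s) = 13/16 < 1`. -/
theorem S_value_EL_section :
    (3 / 28 : ℝ) *
      ((∫ u in (0:ℝ)..1, ∫ v in (0:ℝ)..(1 + u), 2 * (3 - u) * (1 + u - v)) +
       (∫ u in (1:ℝ)..(3/2), ∫ v in (0:ℝ)..2, 4 * (v - 2) * (-3 + 2 * u))) =
      13 / 16 ∧ (13 / 16 : ℝ) < 1 := by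
  constructor
  · have h1 : ∀ u : ℝ, (∫ v in (0:ℝ)..(1 + u), 2 * (3 - u) * (1 + u - v))
        = (3 - u) * (1 + u)^2 := by
      intro u
      have e : (∫ v in (0:ℝ)..(1 + u), 2 * (3 - u) * (1 + u - v))
          = ∫ v in (0:ℝ)..(1 + u),
              ((2*(3-u)*(1+u)) + (-(2*(3-u)))*v + 0*v^2 + 0*v^3) := by
        congr 1; ext v; ring
      rw [e, poly_int]; ring
    have h2 : ∀ u : ℝ, (∫ v in (0:ℝ)..2, 4 * (v - 2) * (-3 + 2 * u))
        = -8 * (-3 + 2 * u) := by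
      intro u
      have e : (∫ v in (0:ℝ)..2, 4 * (v - 2) * (-3 + 2 * u))
          = ∫ v in (0:ℝ)..2,
              ((-8*(-3+2*u)) + (4*(-3+2*u))*v + 0*v^2 + 0*v^3) := by
        congr 1; ext v; ring
      rw [e, poly_int]; ring
    simp only [h1, h2]
    have e1 : (∫ u in (0:ℝ)..1, (3 - u) * (1 + u)^2)
        = ∫ u in (0:ℝ)..1, (3 + 5*u + 1*u^2 + (-1)*u^3) := by
      congr 1; ext u; ring
    have e2 : (∫ u in (1:ℝ)..(3/2), -8 * (-3 + 2 * u))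
        = ∫ u in (1:ℝ)..(3/2), (24 + (-16)*u + 0*u^2 + 0*u^3) := by
      congr 1; ext u; ring
    rw [e1, e2, poly_int, poly_int]
    norm_num
  · norm_num
end

section
/- Evaluate: (3/28)·[∫_0^1 ∫_0^1 (2uv - 4u - 6v + 10) dv du + ∫_0^1 ∫_1^2 2(v-2)(v-3+u) dv du + ∫_1^{3/2} ∫_0^{3-2u} (8u^2 + 4uv - 32u - 8v + 30) dv du + ∫_1^{3/2} ∫_{3-2u}^{6-4u} 2(4-2u-v)(6-4u-v) dv du] = 89/112, and in particular 89/112 < 1. -/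
open intervalIntegral

lemma integral_cubic (c0 c1 c2 c3 lo hi : ℝ) :
    (∫ x in lo..hi, (c0 + c1 * x + c2 * x ^ 2 + c3 * x ^ 3)) =
      (c0 * hi + c1 / 2 * hi ^ 2 + c2 / 3 * hi ^ 3 + c3 / 4 * hi ^ 4) -
      (c0 * lo + c1 / 2 * lo ^ 2 + c2 / 3 * lo ^ 3 + c3 / 4 * lo ^ 4) := by
  have h : ∀ x ∈ Set.uIcc lo hi,
      HasDerivAt (fun x : ℝ => c0 * x + c1 / 2 * x ^ 2 + c2 / 3 * x ^ 3 + c3 / 4 * x ^ 4)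
        (c0 + c1 * x + c2 * x ^ 2 + c3 * x ^ 3) x := by
    intro x _
    have h1 : HasDerivAt (fun x : ℝ => c0 * x + c1 / 2 * x ^ 2 + c2 / 3 * x ^ 3 + c3 / 4 * x ^ 4)
        (c0 * 1 + c1 / 2 * (2 * x ^ 1) + c2 / 3 * (3 * x ^ 2) + c3 / 4 * (4 * x ^ 3)) x := by
      exact ((((hasDerivAt_id x).const_mul c0).add
        (((hasDerivAt_pow 2 x).const_mul (c1 / 2)))).add
        ((hasDerivAt_pow 3 x).const_mul (c2 / 3))).add
        ((hasDerivAt_pow 4 x).const_mul (c3 / 4))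
    convert h1 using 1; ring
  rw [intervalIntegral.integral_eq_sub_of_hasDerivAt h
    ((by fun_prop : Continuous fun x : ℝ => c0 + c1 * x + c2 * x ^ 2 + c3 * x ^ 3).intervalIntegrable lo hi)]

/-- `S(W_{•,•}^Q; ℓ₂) = 89/112 < 1`. -/
theorem S_value_Q_ell2 :
    (3 / 28 : ℝ) *
      ((∫ u in (0:ℝ)..1, ∫ v in (0:ℝ)..1, (2 * u * v - 4 * u - 6 * v + 10)) +
       (∫ u in (0:ℝ)..1, ∫ v in (1:ℝ)..2, 2 * (v - 2) * (v - 3 + u)) +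
       (∫ u in (1:ℝ)..(3/2), ∫ v in (0:ℝ)..(3 - 2 * u),
          (8 * u ^ 2 + 4 * u * v - 32 * u - 8 * v + 30)) +
       (∫ u in (1:ℝ)..(3/2), ∫ v in (3 - 2 * u)..(6 - 4 * u),
          2 * (4 - 2 * u - v) * (6 - 4 * u - v))) =
      89 / 112 ∧ (89 / 112 : ℝ) < 1 := by
  have h1 : (∫ u in (0:ℝ)..1, ∫ v in (0:ℝ)..1, (2 * u * v - 4 * u - 6 * v + 10)) = 11 / 2 := by
    have hin : ∀ u : ℝ, (∫ v in (0:ℝ)..1, (2 * u * v - 4 * u - 6 * v + 10)) = 7 - 3 * u := by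
      intro u
      have e : ∀ v : ℝ, 2 * u * v - 4 * u - 6 * v + 10
          = (10 - 4 * u) + (2 * u - 6) * v + 0 * v ^ 2 + 0 * v ^ 3 := fun v => by ring
      simp only [e]; rw [integral_cubic]; ring
    simp only [hin]
    have e : ∀ u : ℝ, 7 - 3 * u = 7 + (-3) * u + 0 * u ^ 2 + 0 * u ^ 3 := fun u => by ring
    simp only [e]; rw [integral_cubic]; ring
  have h2 : (∫ u in (0:ℝ)..1, ∫ v in (1:ℝ)..2, 2 * (v - 2) * (v - 3 + u)) = 7 / 6 := by
    have hin : ∀ u : ℝ, (∫ v in (1:ℝ)..2, 2 * (v - 2) * (v - 3 + u)) = 5 / 3 - u := by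
      intro u
      have e : ∀ v : ℝ, 2 * (v - 2) * (v - 3 + u)
          = (12 - 4 * u) + (2 * u - 10) * v + 2 * v ^ 2 + 0 * v ^ 3 := fun v => by ring
      simp only [e]; rw [integral_cubic]; ring
    simp only [hin]
    have e : ∀ u : ℝ, 5 / 3 - u = 5 / 3 + (-1) * u + 0 * u ^ 2 + 0 * u ^ 3 := fun u => by ring
    simp only [e]; rw [integral_cubic]; ring
  have h3 : (∫ u in (1:ℝ)..(3/2), ∫ v in (0:ℝ)..(3 - 2 * u),
      (8 * u ^ 2 + 4 * u * v - 32 * u - 8 * v + 30)) = 5 / 8 := by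
    have hin : ∀ u : ℝ, (∫ v in (0:ℝ)..(3 - 2 * u),
        (8 * u ^ 2 + 4 * u * v - 32 * u - 8 * v + 30))
        = 54 + (-90) * u + 48 * u ^ 2 + (-8) * u ^ 3 := by
      intro u
      have e : ∀ v : ℝ, 8 * u ^ 2 + 4 * u * v - 32 * u - 8 * v + 30
          = (8 * u ^ 2 - 32 * u + 30) + (4 * u - 8) * v + 0 * v ^ 2 + 0 * v ^ 3 := fun v => by ring
      simp only [e]; rw [integral_cubic]; ring
    simp only [hin]; rw [integral_cubic]; ring
  have h4 : (∫ u in (1:ℝ)..(3/2), ∫ v in (3 - 2 * u)..(6 - 4 * u),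
      2 * (4 - 2 * u - v) * (6 - 4 * u - v)) = 1 / 8 := by
    have hin : ∀ u : ℝ, (∫ v in (3 - 2 * u)..(6 - 4 * u),
        2 * (4 - 2 * u - v) * (6 - 4 * u - v))
        = 0 + 6 * u + (-8) * u ^ 2 + (8 / 3) * u ^ 3 := by
      intro u
      have e : ∀ v : ℝ, 2 * (4 - 2 * u - v) * (6 - 4 * u - v)
          = (48 - 56 * u + 16 * u ^ 2) + (12 * u - 20) * v + 2 * v ^ 2 + 0 * v ^ 3 := fun v => by ring
      simp only [e]; rw [integral_cubic]; ring
    simp only [hin]; rw [integral_cubic]; ring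
  rw [h1, h2, h3, h4]
  norm_num
end
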